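/- arXiv:2206.09284 — 5 statements merged into one kernel-verified Lean document; each statement's English description precedes it below -/
import Mathlib

section
/- If v ∈ (F_{q^m})^n has rank r and v = v_1 + ... + v_r with each v_j of rank 1, then v_1, ..., v_r are linearly independent over F_{q^m}. -/
open Submodule

/-- The rank of a vector `v ∈ L^n`: the `Fq`-dimension of the `Fq`-span of its entries. -/
noncomputable def rkVec (Fq : Type*) {L : Type*} [Field Fq] [Field L] [Algebra Fq L]
    {n : ℕ} (v : Fin n → L) : ℕ :=
  Module.finrank Fq ↥(Submodule.span Fq (Set.range v))

/-- The rank-metric lattice `L_i(n,m;q)`: subspaces of `L^n` spanned by their vectors of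
rank at most `i`. -/
def RML (Fq L : Type*) [Field Fq] [Field L] [Algebra Fq L] (n i : ℕ) :
    Set (Submodule L (Fin n → L)) :=
  {X | X = Submodule.span L {x | x ∈ X ∧ rkVec Fq x ≤ i}}

/-- The meet in the rank-metric lattice: span of the rank-`≤ i` vectors of the intersection. -/
def rmlMeet (Fq : Type*) {L : Type*} [Field Fq] [Field L] [Algebra Fq L] {n : ℕ} (i : ℕ)
    (X Y : Submodule L (Fin n → L)) : Submodule L (Fin n → L) :=
  Submodule.span L {x | x ∈ X ⊓ Y ∧ rkVec Fq x ≤ i}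

/-- `X` is a modular element of the rank-metric lattice `L_i`. -/
def IsModularElt (Fq : Type*) {L : Type*} [Field Fq] [Field L] [Algebra Fq L] {n : ℕ} (i : ℕ)
    (X : Submodule L (Fin n → L)) : Prop :=
  ∀ Y ∈ RML Fq L n i,
    Module.finrank L ↥(rmlMeet Fq i X Y) + Module.finrank L ↥(X ⊔ Y)
      = Module.finrank L ↥X + Module.finrank L ↥Y

theorem linearIndependent_of_sum_rank_one (q m n : ℕ) (hq : IsPrimePow q) (hn : 2 ≤ n)
    (hm : 2 ≤ m) (Fq L : Type) [Field Fq] [Field L] [Algebra Fq L] [Fintype Fq]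
    (hcard : Fintype.card Fq = q) (hdim : Module.finrank Fq L = m)
    (r : ℕ) (v : Fin n → L) (hr : rkVec Fq v = r)
    (w : Fin r → Fin n → L) (hw : ∀ j, rkVec Fq (w j) = 1) (hsum : v = ∑ j, w j) :
    LinearIndependent L w := by
  classical
  haveI : FiniteDimensional Fq L := FiniteDimensional.of_finrank_pos (by omega)
  -- Step 1: decompose each rank-one vector
  have h1 : ∀ j, ∃ c : L, c ≠ 0 ∧ ∃ x : Fin n → Fq, ∀ i, w j i = x i • c := by
    intro j
    have h := hw j
    rw [rkVec, finrank_eq_one_iff'] at h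
    obtain ⟨v0, hv0, hall⟩ := h
    refine ⟨(v0 : L), by simpa using hv0, ?_⟩
    have hx : ∀ i, ∃ x : Fq, x • (v0 : L) = w j i := by
      intro i
      obtain ⟨xc, hxc⟩ := hall ⟨w j i, Submodule.subset_span ⟨i, rfl⟩⟩
      exact ⟨xc, congrArg Subtype.val hxc⟩
    choose x hxx using hx
    exact ⟨x, fun i => (hxx i).symm⟩
  choose c hc0 x hx using h1
  -- v i = ∑ j, x j i • c j
  have hvic : ∀ i, v i = ∑ j, x j i • c j := by
    intro i
    rw [hsum]
    simp only [Finset.sum_apply]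
    exact Finset.sum_congr rfl fun j _ => hx j i
  -- span inclusion
  have hle : Submodule.span Fq (Set.range v) ≤ Submodule.span Fq (Set.range c) := by
    rw [Submodule.span_le]
    rintro _ ⟨i, rfl⟩
    rw [hvic i]
    exact Submodule.sum_mem _ fun j _ =>
      Submodule.smul_mem _ _ (Submodule.subset_span ⟨j, rfl⟩)
  simp only [rkVec] at hr
  have hfle : r ≤ Module.finrank Fq ↥(Submodule.span Fq (Set.range c)) := by
    have h2 := Submodule.finrank_mono hle
    omega
  -- c is linearly independent over Fq
  have hcind : LinearIndependent Fq c := by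
    rw [linearIndependent_iff_card_le_finrank_span]
    simpa [Set.finrank] using hfle
  -- spans are equal, so each c k lies in span of v
  have hspaneq : Submodule.span Fq (Set.range v) = Submodule.span Fq (Set.range c) := by
    apply Submodule.eq_of_le_of_finrank_le hle
    rw [hr]; exact (finrank_range_le_card c).trans (by simp)
  have hck : ∀ k, ∃ β : Fin n → Fq, ∑ i, β i • v i = c k := by
    intro k
    rw [← mem_span_range_iff_exists_fun, hspaneq]
    exact Submodule.subset_span ⟨k, rfl⟩
  choose β hβ using hck
  -- the duality relation
  have hdelta : ∀ k j, (∑ i, β k i * x j i) = if j = k then 1 else 0 := by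
    intro k j
    have hck2 : c k = ∑ j, (∑ i, β k i * x j i) • c j := by
      calc c k = ∑ i, β k i • v i := (hβ k).symm
        _ = ∑ i, ∑ j, β k i • (x j i • c j) := by
            refine Finset.sum_congr rfl fun i _ => ?_
            rw [hvic i, Finset.smul_sum]
        _ = ∑ j, ∑ i, (β k i * x j i) • c j := by
            rw [Finset.sum_comm]
            exact Finset.sum_congr rfl fun j _ => Finset.sum_congr rfl fun i _ =>
              (smul_smul _ _ _)
        _ = ∑ j, (∑ i, β k i * x j i) • c j := by
            exact Finset.sum_congr rfl fun j _ => (Finset.sum_smul).symm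
    have h0 : ∑ j, ((∑ i, β k i * x j i) - if j = k then 1 else 0) • c j = 0 := by
      have : (∑ j, (if j = k then (1:Fq) else 0) • c j) = c k := by
        simp [ite_smul]
      simp only [sub_smul, Finset.sum_sub_distrib, this, ← hck2, sub_self]
    exact sub_eq_zero.mp (Fintype.linearIndependent_iff.mp hcind _ h0 j)
  -- final computation
  rw [Fintype.linearIndependent_iff]
  intro a ha k
  have hai : ∀ i, ∑ j, x j i • (a j * c j) = 0 := by
    intro i
    have h := congrFun ha i
    simp only [Finset.sum_apply, Pi.smul_apply, smul_eq_mul, Pi.zero_apply] at h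
    rw [← h]
    exact Finset.sum_congr rfl fun j _ => by rw [hx j i, mul_smul_comm]
  have hak : a k * c k = 0 := by
    calc a k * c k = ∑ j, if j = k then a j * c j else 0 := by simp
      _ = ∑ j, (if j = k then (1:Fq) else 0) • (a j * c j) := by
          refine Finset.sum_congr rfl fun j _ => ?_
          split <;> simp
      _ = ∑ j, (∑ i, β k i * x j i) • (a j * c j) := by
          refine Finset.sum_congr rfl fun j _ => ?_
          rw [hdelta k j]
      _ = ∑ j, ∑ i, β k i • (x j i • (a j * c j)) := by
          exact Finset.sum_congr rfl fun j _ => by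
            rw [Finset.sum_smul]
            exact Finset.sum_congr rfl fun i _ => (smul_smul _ _ _).symm
      _ = ∑ i, β k i • (∑ j, x j i • (a j * c j)) := by
          rw [Finset.sum_comm]
          refine Finset.sum_congr rfl fun i _ => (Finset.smul_sum).symm
      _ = 0 := by simp [hai]
  rcases mul_eq_zero.mp hak with h | h
  · exact h
  · exact absurd h (hc0 k)
end

section
/- If v ∈ (F_{q^m})^n has rank r and v = v_1 + ... + v_r with each v_j of rank 1, then for every subset S ⊆ {1,...,r}, the vector ∑_{j∈S} v_j has rank exactly |S|. -/
open Submodule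

/-! Splitting `v` as `∑_{j ∈ S} w j + ∑_{j ∉ S} w j`, subadditivity of the rank bounds the two
parts by `|S|` and `r - |S|`; since their sum has rank `r`, both bounds are attained. -/

section RankSubadditive

variable (Fq : Type*) {L : Type*} [Field Fq] [Field L] [Algebra Fq L] {n : ℕ}

instance finiteDimensional_span_range (v : Fin n → L) :
    FiniteDimensional Fq (span Fq (Set.range v)) :=
  FiniteDimensional.span_of_finite Fq (Set.finite_range v)

lemma rkVec_zero : rkVec Fq (0 : Fin n → L) = 0 := by
  rw [rkVec, span_eq_bot.mpr (by rintro _ ⟨i, rfl⟩; rfl), finrank_bot]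

lemma span_range_add_le_sup (x y : Fin n → L) :
    span Fq (Set.range (x + y)) ≤ span Fq (Set.range x) ⊔ span Fq (Set.range y) :=
  span_le.mpr <| by
    rintro _ ⟨i, rfl⟩
    exact add_mem_sup (subset_span ⟨i, rfl⟩) (subset_span ⟨i, rfl⟩)

lemma rkVec_add_le (x y : Fin n → L) : rkVec Fq (x + y) ≤ rkVec Fq x + rkVec Fq y :=
  (finrank_mono (span_range_add_le_sup Fq x y)).trans (finrank_add_le_finrank_add_finrank _ _)

lemma rkVec_sum_le {ι : Type*} (S : Finset ι) (f : ι → Fin n → L) :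
    rkVec Fq (∑ j ∈ S, f j) ≤ ∑ j ∈ S, rkVec Fq (f j) :=
  Finset.le_sum_of_subadditive _ (rkVec_zero Fq).le (rkVec_add_le Fq) S f

lemma rkVec_sum_le_card {ι : Type*} (S : Finset ι) (f : ι → Fin n → L)
    (hf : ∀ j ∈ S, rkVec Fq (f j) ≤ 1) : rkVec Fq (∑ j ∈ S, f j) ≤ S.card :=
  (rkVec_sum_le Fq S f).trans <| by simpa using Finset.sum_le_card_nsmul S _ 1 hf

end RankSubadditive

theorem rank_subsum_of_rank_one_decomposition_general (n : ℕ) (Fq L : Type) [Field Fq] [Field L]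
    [Algebra Fq L] (r : ℕ) (v : Fin n → L) (hr : rkVec Fq v = r)
    (w : Fin r → Fin n → L) (hw : ∀ j, rkVec Fq (w j) = 1) (hsum : v = ∑ j, w j) :
    ∀ S : Finset (Fin r), rkVec Fq (∑ j ∈ S, w j) = S.card := by
  intro S
  have hS := rkVec_sum_le_card Fq S w fun j _ => (hw j).le
  have hSc := rkVec_sum_le_card Fq Sᶜ w fun j _ => (hw j).le
  have hsplit := rkVec_add_le Fq (∑ j ∈ S, w j) (∑ j ∈ Sᶜ, w j)
  rw [Finset.sum_add_sum_compl, ← hsum, hr] at hsplit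
  have hcard : S.card + Sᶜ.card = r := S.card_add_card_compl.trans (Fintype.card_fin r)
  omega

theorem rank_subsum_of_rank_one_decomposition (q m n : ℕ) (hq : IsPrimePow q) (hn : 2 ≤ n)
    (hm : 2 ≤ m) (Fq L : Type) [Field Fq] [Field L] [Algebra Fq L] [Fintype Fq]
    (hcard : Fintype.card Fq = q) (hdim : Module.finrank Fq L = m)
    (r : ℕ) (v : Fin n → L) (hr : rkVec Fq v = r)
    (w : Fin r → Fin n → L) (hw : ∀ j, rkVec Fq (w j) = 1) (hsum : v = ∑ j, w j) :
    ∀ S : Finset (Fin r), rkVec Fq (∑ j ∈ S, w j) = S.card :=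
  rank_subsum_of_rank_one_decomposition_general n Fq L r v hr w hw hsum
end

section
/- The lattice L_1(n,m;q) is isomorphic as a poset to the lattice of F_q-subspaces of F_q^n; the isomorphism sends an F_q-subspace U of F_q^n to its F_{q^m}-span U ⊗_{F_q} F_{q^m} inside (F_{q^m})^n. In particular, L_1(n,m;q) is a modular lattice. -/
open Submodule

/-!
A vector of `L^n` has rank at most one iff it is an `L`-multiple of a vector with entries in `K`.
Hence a subspace `X` lies in `L_1` iff it is the `L`-span of its `K`-rational points `X ∩ K^n`.
Extension of scalars `U ↦ span_L U` and `X ↦ X ∩ K^n` form a Galois connection, and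
`(span_L U) ∩ K^n = U` because a `K`-linear retraction `π : L → K` of `K → L`, applied
coordinatewise, sends an `L`-combination `∑ cⱼ vⱼ` of vectors of `U` to `∑ π(cⱼ) vⱼ ∈ U`.
So extension of scalars is an order embedding onto `L_1`; it preserves joins, and the meet of
`L_1` is the extension of the intersection of rational points, so the modular law descends
from `K^n`.
-/

open Submodule

section Descent

variable (K L ι : Type*) [Field K] [Field L] [Algebra K L]

noncomputable def piAlgebraMap : (ι → K) →ₗ[K] (ι → L) :=
  (Algebra.linearMap K L).compLeft ι

variable {ι}

noncomputable def extSpan (U : Submodule K (ι → K)) : Submodule L (ι → L) :=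
  span L (piAlgebraMap K L ι '' U)

/-- `X ∩ K^ι`, viewed as a `K`-subspace of `K^ι`. -/
noncomputable def rationalPoints (X : Submodule L (ι → L)) : Submodule K (ι → K) :=
  (X.restrictScalars K).comap (piAlgebraMap K L ι)

variable {K L}

@[simp]
lemma piAlgebraMap_apply (u : ι → K) (i : ι) : piAlgebraMap K L ι u i = algebraMap K L (u i) :=
  rfl

lemma gc_extSpan_rationalPoints :
    GaloisConnection (extSpan K L (ι := ι)) (rationalPoints K L) := fun _ _ =>
  span_le.trans Set.image_subset_iff

lemma rationalPoints_extSpan (U : Submodule K (ι → K)) :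
    rationalPoints K L (extSpan K L U) = U := by
  refine le_antisymm (fun u hu => ?_) (gc_extSpan_rationalPoints.le_u_l U)
  obtain ⟨π, hπ⟩ := (Algebra.linearMap K L).exists_leftInverse_of_injective
    (LinearMap.ker_eq_bot.mpr (algebraMap K L).injective)
  have hπ_one : π 1 = 1 := by simpa using LinearMap.congr_fun hπ 1
  have hπ_smul (c : L) (v : ι → K) : π.compLeft ι (c • piAlgebraMap K L ι v) = π c • v := by
    ext i
    simp [mul_comm c, ← Algebra.smul_def, mul_comm (v i)]
  -- The motive quantifies over `c` so that the `L`-scalar step of the induction goes through.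
  have key : ∀ x ∈ extSpan K L U, ∀ c : L, π.compLeft ι (c • x) ∈ U := by
    intro x hx
    induction hx using span_induction with
    | mem x hx =>
      obtain ⟨v, hv, rfl⟩ := hx
      exact fun c => hπ_smul c v ▸ U.smul_mem _ hv
    | zero => simp
    | add x y _ _ hx hy => exact fun c => by simpa [smul_add] using add_mem (hx c) (hy c)
    | smul d x _ hx => exact fun c => by simpa [smul_smul] using hx (c * d)
  have := key _ hu 1
  rwa [hπ_smul, hπ_one, one_smul] at this

lemma extSpan_sup (U V : Submodule K (ι → K)) :
    extSpan K L (U ⊔ V) = extSpan K L U ⊔ extSpan K L V :=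
  gc_extSpan_rationalPoints.l_sup

lemma rationalPoints_inf (X Y : Submodule L (ι → L)) :
    rationalPoints K L (X ⊓ Y) = rationalPoints K L X ⊓ rationalPoints K L Y :=
  gc_extSpan_rationalPoints.u_inf

lemma rationalPoints_mono : Monotone (rationalPoints K L (ι := ι)) :=
  gc_extSpan_rationalPoints.monotone_u

lemma extSpan_le_extSpan_iff {U V : Submodule K (ι → K)} :
    extSpan K L U ≤ extSpan K L V ↔ U ≤ V := by
  rw [gc_extSpan_rationalPoints.le_iff_le, rationalPoints_extSpan]

end Descent

section RankOne

variable {K L : Type*} [Field K] [Field L] [Algebra K L] {n : ℕ}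

lemma rkVec_le_one_iff {x : Fin n → L} :
    rkVec K x ≤ 1 ↔ ∃ (w : L) (c : Fin n → K), x = w • piAlgebraMap K L (Fin n) c := by
  constructor
  · intro h
    have : FiniteDimensional K (span K (Set.range x)) :=
      FiniteDimensional.span_of_finite K (Set.finite_range x)
    obtain ⟨w, hw⟩ := finrank_le_one_iff.mp h
    choose c hc using fun i => hw ⟨x i, subset_span (Set.mem_range_self i)⟩
    refine ⟨w, c, funext fun i => ?_⟩
    simpa [Algebra.smul_def, mul_comm] using (congrArg Subtype.val (hc i)).symm
  · rintro ⟨w, c, rfl⟩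
    have hle : span K (Set.range (w • piAlgebraMap K L (Fin n) c)) ≤ K ∙ w := by
      refine span_le.mpr (Set.range_subset_iff.mpr fun i => mem_span_singleton.mpr ⟨c i, ?_⟩)
      simp [Algebra.smul_def, mul_comm]
    calc rkVec K (w • piAlgebraMap K L (Fin n) c) ≤ Module.finrank K (K ∙ w) := finrank_mono hle
      _ ≤ 1 := by simpa using finrank_span_le_card ({w} : Set L)

lemma span_rkVec_le_one_eq (X : Submodule L (Fin n → L)) :
    span L {x | x ∈ X ∧ rkVec K x ≤ 1} = extSpan K L (rationalPoints K L X) := by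
  refine le_antisymm (span_le.mpr ?_) (span_le.mpr ?_)
  · rintro _ ⟨hx, hr⟩
    obtain ⟨w, c, rfl⟩ := rkVec_le_one_iff.mp hr
    rcases eq_or_ne w 0 with rfl | hw
    · simp
    have hc : piAlgebraMap K L (Fin n) c ∈ X := by simpa [smul_smul, hw] using X.smul_mem w⁻¹ hx
    exact smul_mem _ _ (subset_span ⟨c, hc, rfl⟩)
  · rintro _ ⟨c, hc, rfl⟩
    exact subset_span ⟨hc, rkVec_le_one_iff.mpr ⟨1, c, (one_smul _ _).symm⟩⟩

lemma mem_RML_one_iff {X : Submodule L (Fin n → L)} :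
    X ∈ RML K L n 1 ↔ extSpan K L (rationalPoints K L X) = X := by
  rw [← span_rkVec_le_one_eq]
  exact eq_comm

lemma range_extSpan : Set.range (extSpan K L (ι := Fin n)) = RML K L n 1 := by
  ext X
  rw [mem_RML_one_iff]
  constructor
  · rintro ⟨U, rfl⟩
    rw [rationalPoints_extSpan]
  · exact fun h => ⟨_, h⟩

lemma rmlMeet_one_eq (X Y : Submodule L (Fin n → L)) :
    rmlMeet K 1 X Y = extSpan K L (rationalPoints K L X ⊓ rationalPoints K L Y) := by
  rw [rmlMeet, span_rkVec_le_one_eq, rationalPoints_inf]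

lemma rationalPoints_sup_of_mem_RML {X Y : Submodule L (Fin n → L)} (hX : X ∈ RML K L n 1)
    (hY : Y ∈ RML K L n 1) :
    rationalPoints K L (X ⊔ Y) = rationalPoints K L X ⊔ rationalPoints K L Y := by
  rw [← mem_RML_one_iff.mp hX, ← mem_RML_one_iff.mp hY, ← extSpan_sup,
    rationalPoints_extSpan, rationalPoints_extSpan, rationalPoints_extSpan]

end RankOne

theorem rml_one_orderIso_subspace_lattice_general (n : ℕ) (Fq L : Type) [Field Fq] [Field L]
    [Algebra Fq L] :
    (∃ f : Submodule Fq (Fin n → Fq) ≃o {X : Submodule L (Fin n → L) // X ∈ RML Fq L n 1},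
      ∀ U : Submodule Fq (Fin n → Fq),
        (f U : Submodule L (Fin n → L)) =
          Submodule.span L ((fun u i => algebraMap Fq L (u i)) '' (U : Set (Fin n → Fq)))) ∧
    (∀ X ∈ RML Fq L n 1, ∀ Y ∈ RML Fq L n 1, ∀ Z ∈ RML Fq L n 1, X ≤ Z →
      rmlMeet Fq 1 (X ⊔ Y) Z = X ⊔ rmlMeet Fq 1 Y Z) := by
  refine ⟨⟨(OrderEmbedding.ofMapLEIff (extSpan Fq L (ι := Fin n)) fun _ _ =>
    extSpan_le_extSpan_iff).orderIso.trans (OrderIso.setCongr _ _ range_extSpan),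
    fun U => rfl⟩, ?_⟩
  intro X hX Y hY Z _ hXZ
  rw [rmlMeet_one_eq, rmlMeet_one_eq, rationalPoints_sup_of_mem_RML hX hY,
    sup_inf_assoc_of_le _ (rationalPoints_mono hXZ), extSpan_sup, mem_RML_one_iff.mp hX]

theorem rml_one_orderIso_subspace_lattice (q m n : ℕ) (hq : IsPrimePow q) (hn : 2 ≤ n)
    (hm : 2 ≤ m) (Fq L : Type) [Field Fq] [Field L] [Algebra Fq L] [Fintype Fq]
    (hcard : Fintype.card Fq = q) (hdim : Module.finrank Fq L = m) :
    (∃ f : Submodule Fq (Fin n → Fq) ≃o {X : Submodule L (Fin n → L) // X ∈ RML Fq L n 1},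
      ∀ U : Submodule Fq (Fin n → Fq),
        (f U : Submodule L (Fin n → L)) =
          Submodule.span L ((fun u i => algebraMap Fq L (u i)) '' (U : Set (Fin n → Fq)))) ∧
    (∀ X ∈ RML Fq L n 1, ∀ Y ∈ RML Fq L n 1, ∀ Z ∈ RML Fq L n 1, X ≤ Z →
      rmlMeet Fq 1 (X ⊔ Y) Z = X ⊔ rmlMeet Fq 1 Y Z) :=
  rml_one_orderIso_subspace_lattice_general n Fq L
end

section
/- Rank-metric Singleton bound: if C is an F_{q^m}-linear subspace of (F_{q^m})^n of dimension k ≥ 1 in which every nonzero vector has rank at least d (where 1 ≤ d ≤ min{n,m}), then mk ≤ max{n,m}(min{n,m} − d + 1). -/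
open Submodule

/-!
Writing the entries of `v ∈ L^n` in an `Fq`-basis of `L` turns `v` into an `n × m` matrix over `Fq`
whose rank is `rkVec Fq v`; it is at most the number of nonzero rows and at most the number of
nonzero columns, so a nonzero codeword survives the deletion of any `d - 1` rows or columns.
Deleting `d - 1` rows is thus an `L`-linear injection `C → L^(n-d+1)`, giving
`k ≤ n - d + 1`, and deleting `d - 1` columns is an `Fq`-linear injection `C → Fq^(n × (m-d+1))`,
giving `mk ≤ n(m - d + 1)`. The smaller of the two bounds is the claimed one.
-/

section
variable {Fq L : Type*} [Field Fq] [Field L] [Algebra Fq L] {n d : ℕ}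

theorem rkVec_le_card_of_forall_mem_span {v : Fin n → L} {s : Finset L}
    (h : ∀ j, v j ∈ span Fq (s : Set L)) : rkVec Fq v ≤ s.card :=
  (Submodule.finrank_mono (span_le.mpr (Set.range_subset_iff.mpr h))).trans
    (finrank_span_finset_le_card s)

theorem rkVec_le_card_of_eq_zero {v : Fin n → L} {t : Finset (Fin n)}
    (h : ∀ j ∉ t, v j = 0) : rkVec Fq v ≤ t.card := by
  classical
  refine (rkVec_le_card_of_forall_mem_span (s := t.image v) fun j => ?_).trans
    Finset.card_image_le
  by_cases hj : j ∈ t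
  · exact subset_span (Finset.mem_image_of_mem v hj)
  · rw [h j hj]
    exact zero_mem _

theorem injective_of_le_rkVec {R M : Type*} [Ring R] [Module R L] [AddCommGroup M] [Module R M]
    {C : Submodule R (Fin n → L)} (hC : ∀ v ∈ C, v ≠ 0 → d ≤ rkVec Fq v)
    (φ : C →ₗ[R] M) (hφ : ∀ v : C, φ v = 0 → rkVec Fq (v : Fin n → L) < d) :
    Function.Injective φ := by
  refine (injective_iff_map_eq_zero φ).mpr fun v hv => ?_
  by_contra hne
  exact (hC v v.2 (by simpa using hne)).not_gt (hφ v hv)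

theorem finrank_le_sub_add_one_of_le_rkVec (C : Submodule L (Fin n → L)) (hd : 1 ≤ d)
    (hdn : d ≤ n) (hC : ∀ v ∈ C, v ≠ 0 → d ≤ rkVec Fq v) :
    Module.finrank L C ≤ n - d + 1 := by
  obtain ⟨s, -, hs⟩ := Finset.exists_subset_card_eq (s := (Finset.univ : Finset (Fin n)))
    (n := n - d + 1) (by rw [Finset.card_univ, Fintype.card_fin]; omega)
  let puncture := LinearMap.funLeft L L (Subtype.val : s → Fin n) ∘ₗ C.subtype
  have hinj : Function.Injective puncture := by
    refine injective_of_le_rkVec hC puncture fun v hv => ?_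
    have hsc : sᶜ.card < d := by
      rw [Finset.card_compl, hs]
      simp only [Fintype.card_fin]
      omega
    refine (rkVec_le_card_of_eq_zero fun j hj => ?_).trans_lt hsc
    exact congrFun hv ⟨j, by simpa using hj⟩
  simpa [hs] using LinearMap.finrank_le_finrank_of_injective hinj

theorem finrank_le_mul_sub_add_one_of_le_rkVec [FiniteDimensional Fq L]
    (C : Submodule Fq (Fin n → L)) (hd : 1 ≤ d) (hC : ∀ v ∈ C, v ≠ 0 → d ≤ rkVec Fq v) :
    Module.finrank Fq C ≤ n * (Module.finrank Fq L - d + 1) := by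
  classical
  set m := Module.finrank Fq L
  have hm : 0 < m := Module.finrank_pos
  let b := Module.finBasis Fq L
  obtain ⟨s, -, hs⟩ := Finset.exists_subset_card_eq (s := (Finset.univ : Finset (Fin m)))
    (n := m - d + 1) (by rw [Finset.card_univ, Fintype.card_fin]; omega)
  let shorten := LinearMap.compLeft
    (LinearMap.funLeft Fq Fq (Subtype.val : s → Fin m) ∘ₗ b.equivFun.toLinearMap) (Fin n)
      ∘ₗ C.subtype
  have hinj : Function.Injective shorten := by
    refine injective_of_le_rkVec hC shorten fun v hv => ?_
    have hsc : (sᶜ.image b).card < d := by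
      refine Finset.card_image_le.trans_lt ?_
      rw [Finset.card_compl, hs]
      simp only [Fintype.card_fin]
      omega
    refine (rkVec_le_card_of_forall_mem_span fun j => ?_).trans_lt hsc
    rw [Finset.coe_image, b.mem_span_image]
    intro i hi
    by_contra his
    exact Finsupp.mem_support_iff.mp hi (congrFun (congrFun hv j) ⟨i, by simpa using his⟩)
  simpa [hs, Module.finrank_pi_fintype, Module.finrank_fintype_fun_eq_card] using
    LinearMap.finrank_le_finrank_of_injective hinj

end

theorem rank_metric_singleton_bound_general (m n k d : ℕ)
    (hm : 2 ≤ m) (Fq L : Type) [Field Fq] [Field L] [Algebra Fq L]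
    (hdim : Module.finrank Fq L = m)
    (C : Submodule L (Fin n → L)) (hk : Module.finrank L ↥C = k)
    (hd1 : 1 ≤ d) (hd2 : d ≤ min n m)
    (hmin : ∀ v ∈ C, v ≠ 0 → d ≤ rkVec Fq v) :
    m * k ≤ max n m * (min n m - d + 1) := by
  have : FiniteDimensional Fq L := Module.finite_of_finrank_pos (by omega)
  rcases le_total n m with hnm | hmn
  · rw [max_eq_right hnm, min_eq_left hnm, ← hk]
    exact Nat.mul_le_mul_left m (finrank_le_sub_add_one_of_le_rkVec C hd1 (by omega) hmin)
  · rw [max_eq_left hmn, min_eq_right hmn]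
    calc m * k = Module.finrank Fq (C.restrictScalars Fq) := by
          rw [← hdim, ← hk]
          exact Module.finrank_mul_finrank Fq L C
      _ ≤ n * (m - d + 1) := hdim ▸ finrank_le_mul_sub_add_one_of_le_rkVec _ hd1 hmin

theorem rank_metric_singleton_bound (q m n k d : ℕ) (hq : IsPrimePow q) (hn : 2 ≤ n)
    (hm : 2 ≤ m) (Fq L : Type) [Field Fq] [Field L] [Algebra Fq L] [Fintype Fq]
    (hcard : Fintype.card Fq = q) (hdim : Module.finrank Fq L = m)
    (C : Submodule L (Fin n → L)) (hk : Module.finrank L ↥C = k) (hk1 : 1 ≤ k)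
    (hd1 : 1 ≤ d) (hd2 : d ≤ min n m)
    (hmin : ∀ v ∈ C, v ≠ 0 → d ≤ rkVec Fq v) :
    m * k ≤ max n m * (min n m - d + 1) :=
  rank_metric_singleton_bound_general m n k d hm Fq L hdim C hk hd1 hd2 hmin
end

section
/- If n ≤ m, then the characteristic polynomial of L_{n−1}(n,m;q) equals (λ − q^{(n−1)m} + ∏_{s=1}^{n−1}(q^m − q^s)) · ∏_{j=0}^{n−2}(λ − q^{mj}). -/
open Submodule

/-!
Write `Q = q^m = |L|`. For a finite `L`-space `W`, the linear maps `φ : Lⁿ → W` whose kernel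
contains a lattice element `X` number `|W|^(n - dim X)`; sorting them by the lattice closure of
their kernels and applying Möbius inversion gives `χ(|W|)` = the number of `φ` whose kernel
contains no nonzero vector of rank `≤ n - 1` (the critical problem of Crapo and Rota).
A subspace all of whose nonzero vectors have full rank `n` has dimension at most one, since a
plane meets the hyperplane `x₀ = 0`. So these kernels are `0` or one of the
`∏_{s=1}^{n-1} (q^m - q^s)` lines spanned by a full-rank vector, and counting maps with a given
kernel shows that `χ(Q^k)` agrees with the claimed polynomial for every `k`.
-/

open Module

section LinearMapsWithKernel

variable {R V W : Type*} [Ring R] [AddCommGroup V] [Module R V] [AddCommGroup W] [Module R W]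

noncomputable def Submodule.liftQEquiv (U : Submodule R V) :
    {φ : V →ₗ[R] W // U ≤ LinearMap.ker φ} ≃ (V ⧸ U →ₗ[R] W) where
  toFun φ := U.liftQ φ.1 φ.2
  invFun ψ := ⟨ψ.comp U.mkQ, fun x hx => by simp [(Submodule.Quotient.mk_eq_zero U).mpr hx]⟩
  left_inv φ := Subtype.ext (U.liftQ_mkQ φ.1 φ.2)
  right_inv ψ := U.linearMap_qext rfl

noncomputable def Submodule.liftQInjectiveEquiv (U : Submodule R V) :
    {φ : V →ₗ[R] W // LinearMap.ker φ = U} ≃ {ψ : V ⧸ U →ₗ[R] W // Function.Injective ψ} where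
  toFun φ := ⟨U.liftQ φ.1 φ.2.ge, by
    rw [← LinearMap.ker_eq_bot]; exact U.ker_liftQ_eq_bot _ _ φ.2.le⟩
  invFun ψ := ⟨ψ.1.comp U.mkQ, by
    rw [LinearMap.ker_comp, LinearMap.ker_eq_bot.mpr ψ.2, Submodule.comap_bot, U.ker_mkQ]⟩
  left_inv φ := Subtype.ext (U.liftQ_mkQ φ.1 φ.2.ge)
  right_inv ψ := Subtype.ext (U.linearMap_qext rfl)

noncomputable def Module.Basis.injectiveLinearMapEquiv {ι : Type*} (b : Basis ι R V) :
    {ψ : V →ₗ[R] W // Function.Injective ψ} ≃ {s : ι → W // LinearIndependent R s} :=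
  ((b.constr ℕ).toEquiv.subtypeEquiv fun s => by
    refine ⟨b.injective_constr_of_linearIndependent (R₂ := ℕ), fun hs => ?_⟩
    simpa [Function.comp_def] using
      b.linearIndependent.map' _ (LinearMap.ker_eq_bot.mpr hs)).symm

end LinearMapsWithKernel

section FiniteFieldCount

variable {K V W : Type*} [Field K] [Fintype K] [AddCommGroup V] [Module K V]
  [AddCommGroup W] [Module K W] [Finite W]

theorem card_linearIndependent_eq_prod (d : ℕ) :
    (Nat.card {s : Fin d → W // LinearIndependent K s} : ℚ) =
      ∏ j ∈ Finset.range d, ((Fintype.card K : ℚ) ^ finrank K W - (Fintype.card K : ℚ) ^ j) := by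
  have : Module.Finite K W := Module.Finite.of_finite
  rcases le_or_gt d (finrank K W) with hd | hd
  · rw [card_linearIndependent hd, Nat.cast_prod, Finset.prod_range]
    refine Finset.prod_congr rfl fun j _ => ?_
    rw [Nat.cast_sub (Nat.pow_le_pow_right Fintype.card_pos (j.2.le.trans hd))]
    push_cast
    rfl
  · have : IsEmpty {s : Fin d → W // LinearIndependent K s} :=
      ⟨fun s => hd.not_ge (by simpa using s.2.fintype_card_le_finrank)⟩
    rw [Nat.card_of_isEmpty, Nat.cast_zero, eq_comm]
    exact Finset.prod_eq_zero (Finset.mem_range.mpr hd) (sub_self _)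

variable [Finite V]

theorem card_linearMap_ker_ge (U : Submodule K V) :
    Nat.card {φ : V →ₗ[K] W // U ≤ LinearMap.ker φ} =
      Fintype.card K ^ ((finrank K V - finrank K U) * finrank K W) := by
  have : Module.Finite K V := Module.Finite.of_finite
  have : Module.Finite K W := Module.Finite.of_finite
  rw [Nat.card_congr U.liftQEquiv, Module.natCard_eq_pow_finrank (K := K), finrank_linearMap,
    U.finrank_quotient, Nat.card_eq_fintype_card]

theorem card_linearMap_ker_eq (U : Submodule K V) :
    (Nat.card {φ : V →ₗ[K] W // LinearMap.ker φ = U} : ℚ) =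
      ∏ j ∈ Finset.range (finrank K V - finrank K U),
        ((Fintype.card K : ℚ) ^ finrank K W - (Fintype.card K : ℚ) ^ j) := by
  have : Module.Finite K V := Module.Finite.of_finite
  rw [Nat.card_congr (U.liftQInjectiveEquiv.trans (finBasis K (V ⧸ U)).injectiveLinearMapEquiv),
    card_linearIndependent_eq_prod, U.finrank_quotient]

end FiniteFieldCount

section Lines

variable {K V : Type*} [Field K] [AddCommGroup V] [Module K V] [Finite V]

theorem Submodule.card_nonzero_of_finrank_eq_one [Fintype K] {ℓ : Submodule K V}
    (hℓ : finrank K ℓ = 1) : Nat.card {v : V // v ∈ ℓ ∧ v ≠ 0} = Fintype.card K - 1 := by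
  have : Module.Finite K V := Module.Finite.of_finite
  change Nat.card ↥((ℓ : Set V) \ {0}) = _
  rw [Nat.card_coe_set_eq, Set.ncard_sdiff_singleton_of_mem ℓ.zero_mem, ← Nat.card_coe_set_eq,
    SetLike.coe_sort_coe, natCard_eq_pow_finrank (K := K), hℓ, pow_one, Nat.card_eq_fintype_card]

noncomputable def equivSigmaLines (S : Set V) (h0 : (0 : V) ∉ S)
    (hS : ∀ c : K, c ≠ 0 → ∀ v ∈ S, c • v ∈ S) :
    S ≃ Σ ℓ : {U : Submodule K V // finrank K U = 1 ∧ ∀ v ∈ U, v ≠ 0 → v ∈ S},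
      {v : V // v ∈ ℓ.1 ∧ v ≠ 0} where
  toFun v :=
    have hv : v.1 ≠ 0 := fun h => h0 (h ▸ v.2)
    ⟨⟨K ∙ v.1, finrank_span_singleton hv, fun w hw hw0 => by
      obtain ⟨c, rfl⟩ := Submodule.mem_span_singleton.mp hw
      exact hS c (by rintro rfl; simp at hw0) v v.2⟩,
      ⟨v, Submodule.mem_span_singleton_self _, hv⟩⟩
  invFun w := ⟨w.2.1, w.1.2.2 _ w.2.2.1 w.2.2.2⟩
  left_inv v := rfl
  right_inv w := Sigma.subtype_ext (Subtype.ext (Submodule.eq_of_le_of_finrank_eq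
    ((Submodule.span_singleton_le_iff_mem _ _).mpr w.2.2.1)
    (by rw [finrank_span_singleton w.2.2.2, w.1.2.1]))) rfl

theorem card_lines_mul_card_sub_one [Fintype K] (S : Set V) (h0 : (0 : V) ∉ S)
    (hS : ∀ c : K, c ≠ 0 → ∀ v ∈ S, c • v ∈ S) :
    Nat.card {U : Submodule K V // finrank K U = 1 ∧ ∀ v ∈ U, v ≠ 0 → v ∈ S} *
      (Fintype.card K - 1) = Nat.card S := by
  have : Finite (Submodule K V) := Finite.of_injective _ SetLike.coe_injective
  have := Fintype.ofFinite {U : Submodule K V // finrank K U = 1 ∧ ∀ v ∈ U, v ≠ 0 → v ∈ S}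
  rw [Nat.card_congr (equivSigmaLines S h0 hS), Nat.card_sigma,
    Finset.sum_congr rfl fun ℓ _ => Submodule.card_nonzero_of_finrank_eq_one ℓ.2.1,
    Finset.sum_const, smul_eq_mul, Finset.card_univ, Nat.card_eq_fintype_card]

end Lines

theorem Finset.sum_moebius_mul_sum_ge {α R : Type*} [LE α] [DecidableEq α] [DecidableLE α]
    [CommSemiring R] {S : Finset α} {b : α} (hb : b ∈ S) (μ h : α → R)
    (hμ : ∀ t ∈ S, ∑ s ∈ S with s ≤ t, μ s = if t = b then 1 else 0) :
    ∑ X ∈ S, μ X * ∑ t ∈ S with X ≤ t, h t = h b := by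
  calc ∑ X ∈ S, μ X * ∑ t ∈ S with X ≤ t, h t
      = ∑ t ∈ S, (∑ X ∈ S with X ≤ t, μ X) * h t := by
        simp only [Finset.mul_sum, Finset.sum_mul, Finset.sum_filter, mul_ite, ite_mul, mul_zero,
          zero_mul]
        exact Finset.sum_comm
    _ = h b := by
        rw [Finset.sum_congr rfl fun t ht => by rw [hμ t ht, ite_mul, one_mul, zero_mul]]
        rw [Finset.sum_ite_eq' S b, if_pos hb]

theorem Polynomial.eq_of_forall_eval_pow_eq {R : Type*} [CommRing R] [IsDomain R] {Q : R}
    (hQ : Function.Injective (Q ^ · : ℕ → R)) {p r : Polynomial R}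
    (h : ∀ k : ℕ, p.eval (Q ^ k) = r.eval (Q ^ k)) : p = r :=
  eq_of_infinite_eval_eq p r <| (Set.infinite_range_of_injective hQ).mono <| by
    rintro _ ⟨k, rfl⟩
    exact h k

theorem Finset.prod_range_eq_mul_prod_Icc {M : Type*} [CommMonoid M] (f : ℕ → M) {n : ℕ}
    (hn : n ≠ 0) : ∏ j ∈ Finset.range n, f j = f 0 * ∏ j ∈ Finset.Icc 1 (n - 1), f j := by
  rw [Finset.range_eq_Ico, Finset.prod_eq_prod_Ico_succ_bot (Nat.pos_of_ne_zero hn),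
    Finset.Icc_sub_one_right_eq_Ico_of_not_isMin (isMin_iff_eq_bot.not.mpr hn)]


section Rank

variable {Fq L : Type*} [Field Fq] [Field L] [Algebra Fq L]

theorem rkVec_eq_iff_linearIndependent {n : ℕ} (v : Fin n → L) :
    rkVec Fq v = n ↔ LinearIndependent Fq v := by
  rw [linearIndependent_iff_card_eq_finrank_span, Fintype.card_fin, eq_comm]
  rfl

theorem rkVec_le_sub_one_iff {n : ℕ} (hn : n ≠ 0) (v : Fin n → L) :
    rkVec Fq v ≤ n - 1 ↔ ¬LinearIndependent Fq v := by
  have hle : rkVec Fq v ≤ n := by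
    simpa [rkVec, Set.finrank] using finrank_range_le_card (R := Fq) v
  rw [← rkVec_eq_iff_linearIndependent]
  omega

theorem linearIndependent_smul_iff {ι : Type*} {c : L} (hc : c ≠ 0) (v : ι → L) :
    LinearIndependent Fq (c • v) ↔ LinearIndependent Fq v :=
  (LinearMap.mulLeft Fq c).linearIndependent_iff
    (LinearMap.ker_eq_bot.mpr (mul_right_injective₀ hc))

variable (Fq) in
def AllFullRank {ι : Type*} (U : Submodule L (ι → L)) : Prop :=
  ∀ v ∈ U, v ≠ 0 → LinearIndependent Fq v

variable {ι : Type*} [Finite ι] {U : Submodule L (ι → L)}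

theorem AllFullRank.finrank_le_one (hU : AllFullRank Fq U) : finrank L U ≤ 1 := by
  by_contra! h
  cases isEmpty_or_nonempty ι with
  | inl _ =>
    have := (Submodule.finrank_le U).trans_eq (finrank_zero_of_subsingleton (R := L))
    omega
  | inr hι =>
    obtain ⟨i⟩ := hι
    have hker : LinearMap.ker ((LinearMap.proj i).comp U.subtype) ≠ ⊥ :=
      LinearMap.ker_ne_bot_of_finrank_lt (by rwa [finrank_self])
    obtain ⟨u, hu, hu0⟩ := Submodule.exists_mem_ne_zero_of_ne_bot hker
    exact (hU u u.2 (fun h => hu0 (Subtype.ext h))).ne_zero i hu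

theorem allFullRank_iff_eq_bot_or :
    AllFullRank Fq U ↔ U = ⊥ ∨ finrank L U = 1 ∧ AllFullRank Fq U := by
  refine ⟨fun hU => ?_, ?_⟩
  · rcases Nat.le_one_iff_eq_zero_or_eq_one.mp hU.finrank_le_one with h | h
    · exact .inl (Submodule.finrank_eq_zero.mp h)
    · exact .inr ⟨h, hU⟩
  · rintro (rfl | ⟨-, hU⟩)
    · intro v hv hv0
      exact absurd ((Submodule.mem_bot L).mp hv) hv0
    · exact hU

end Rank

section Closure

variable (Fq : Type*) {L : Type*} [Field Fq] [Field L] [Algebra Fq L] {n : ℕ}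

def rmlClosure (i : ℕ) (U : Submodule L (Fin n → L)) : Submodule L (Fin n → L) :=
  span L {x | x ∈ U ∧ rkVec Fq x ≤ i}

variable {Fq}

theorem bot_mem_RML (i : ℕ) : (⊥ : Submodule L (Fin n → L)) ∈ RML Fq L n i :=
  le_antisymm bot_le (span_le.mpr fun _ hx => hx.1)

theorem rmlClosure_mem_RML (i : ℕ) (U : Submodule L (Fin n → L)) :
    rmlClosure Fq i U ∈ RML Fq L n i :=
  le_antisymm (span_mono fun _ hx => ⟨subset_span hx, hx.2⟩) (span_le.mpr fun _ hx => hx.1)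

theorem le_rmlClosure_iff {i : ℕ} {X : Submodule L (Fin n → L)} (hX : X ∈ RML Fq L n i)
    (U : Submodule L (Fin n → L)) : X ≤ rmlClosure Fq i U ↔ X ≤ U := by
  refine ⟨fun h => h.trans (span_le.mpr fun _ hx => hx.1), fun h => ?_⟩
  rw [hX]
  exact span_mono fun x hx => ⟨h hx.1, hx.2⟩

theorem rmlClosure_eq_bot_iff (hn : n ≠ 0) (U : Submodule L (Fin n → L)) :
    rmlClosure Fq (n - 1) U = ⊥ ↔ AllFullRank Fq U := by
  simp only [rmlClosure, span_eq_bot, Set.mem_ofPred_eq, and_imp, AllFullRank,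
    rkVec_le_sub_one_iff hn]
  exact forall₂_congr fun v _ => not_imp_comm

end Closure

section FullRankKernels

variable {Fq L : Type*} [Field Fq] [Field L] [Fintype L] [Algebra Fq L] {n : ℕ}

theorem card_fullRankLines [Fintype Fq] (hn : n ≠ 0) :
    (Nat.card {U : Submodule L (Fin n → L) // finrank L U = 1 ∧ AllFullRank Fq U} : ℚ) =
      ∏ s ∈ Finset.Icc 1 (n - 1),
        ((Fintype.card Fq : ℚ) ^ finrank Fq L - (Fintype.card Fq : ℚ) ^ s) := by
  have h0 : (0 : Fin n → L) ∉ {v | LinearIndependent Fq v} := fun h =>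
    h.ne_zero ⟨0, Nat.pos_of_ne_zero hn⟩ rfl
  have hlines := card_lines_mul_card_sub_one _ h0 fun c hc v hv =>
    (linearIndependent_smul_iff hc v).mpr hv
  have hcount := card_linearIndependent_eq_prod (K := Fq) (W := L) n
  rw [Finset.prod_range_eq_mul_prod_Icc _ hn, pow_zero] at hcount
  have hL : (Fintype.card L : ℚ) = (Fintype.card Fq : ℚ) ^ finrank Fq L := by
    rw [card_eq_pow_finrank (K := Fq), Nat.cast_pow]
  have hL1 : (Fintype.card L : ℚ) - 1 ≠ 0 :=
    sub_ne_zero.mpr (by exact_mod_cast Fintype.one_lt_card.ne')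
  refine mul_left_cancel₀ hL1 ?_
  calc ((Fintype.card L : ℚ) - 1) * Nat.card {U : Submodule L (Fin n → L) //
        finrank L U = 1 ∧ AllFullRank Fq U}
      = Nat.card {v : Fin n → L // LinearIndependent Fq v} := by
        rw [← Nat.cast_pred Fintype.card_pos, ← Nat.cast_mul, mul_comm]
        exact congrArg _ hlines
    _ = _ := by rw [hcount, hL]

theorem card_linearMap_ker_allFullRank (W : Type*) [AddCommGroup W] [Module L W] [Finite W] :
    (Nat.card {φ : (Fin n → L) →ₗ[L] W // AllFullRank Fq (LinearMap.ker φ)} : ℚ) =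
      ∏ j ∈ Finset.range n, ((Fintype.card L : ℚ) ^ finrank L W - (Fintype.card L : ℚ) ^ j) +
        Nat.card {U : Submodule L (Fin n → L) // finrank L U = 1 ∧ AllFullRank Fq U} *
          ∏ j ∈ Finset.range (n - 1),
            ((Fintype.card L : ℚ) ^ finrank L W - (Fintype.card L : ℚ) ^ j) := by
  classical
  have : Finite (Submodule L (Fin n → L)) := Finite.of_injective _ SetLike.coe_injective
  have := Fintype.ofFinite (Submodule L (Fin n → L))
  have : Finite ((Fin n → L) →ₗ[L] W) := Finite.of_injective _ DFunLike.coe_injective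
  have := Fintype.ofFinite ((Fin n → L) →ₗ[L] W)
  set lines := Finset.univ.filter fun U : Submodule L (Fin n → L) =>
    finrank L U = 1 ∧ AllFullRank Fq U
  have hbot : (⊥ : Submodule L (Fin n → L)) ∉ lines := by simp [lines]
  have hfiber : ∀ U ∈ insert ⊥ lines,
      (((Finset.univ.filter fun φ : (Fin n → L) →ₗ[L] W => AllFullRank Fq (LinearMap.ker φ)).filter
        fun φ => LinearMap.ker φ = U).card : ℚ) =
        ∏ j ∈ Finset.range (n - finrank L U),
          ((Fintype.card L : ℚ) ^ finrank L W - (Fintype.card L : ℚ) ^ j) := by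
    intro U hU
    have hUfull : AllFullRank Fq U := allFullRank_iff_eq_bot_or.mpr (by simpa [lines] using hU)
    have hcount := card_linearMap_ker_eq (K := L) (W := W) U
    rw [finrank_fin_fun, Nat.card_eq_fintype_card, Fintype.card_subtype] at hcount
    rw [← hcount, Finset.filter_filter]
    congr 2
    exact Finset.filter_congr fun φ _ => and_iff_right_of_imp fun h => h ▸ hUfull
  rw [Nat.card_eq_fintype_card, Fintype.card_subtype, Nat.card_eq_fintype_card,
    Fintype.card_subtype]
  rw [Finset.card_eq_sum_card_fiberwise (f := LinearMap.ker) (t := insert ⊥ lines)]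
  · push_cast
    rw [Finset.sum_congr rfl hfiber, Finset.sum_insert hbot, finrank_bot, Nat.sub_zero,
      Finset.sum_congr rfl fun U hU => by rw [(Finset.mem_filter.mp hU).2.1], Finset.sum_const,
      nsmul_eq_mul]
  · intro φ hφ
    simpa [lines, ← allFullRank_iff_eq_bot_or] using hφ

end FullRankKernels

section CriticalProblem

variable {Fq L W : Type*} [Field Fq] [Field L] [Fintype L] [Algebra Fq L]
  [AddCommGroup W] [Module L W] [Finite W] {n i : ℕ}

open scoped Classical in
theorem card_linearMap_ker_ge_eq_sum_rmlClosure {𝓛 : Finset (Submodule L (Fin n → L))}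
    (h𝓛 : ↑𝓛 = RML Fq L n i) {X : Submodule L (Fin n → L)} (hX : X ∈ RML Fq L n i) :
    Nat.card {φ : (Fin n → L) →ₗ[L] W // X ≤ LinearMap.ker φ} =
      ∑ t ∈ 𝓛 with X ≤ t,
        Nat.card {φ : (Fin n → L) →ₗ[L] W // rmlClosure Fq i (LinearMap.ker φ) = t} := by
  have : Finite ((Fin n → L) →ₗ[L] W) := Finite.of_injective _ DFunLike.coe_injective
  have := Fintype.ofFinite ((Fin n → L) →ₗ[L] W)
  simp only [Nat.card_eq_fintype_card, Fintype.card_subtype]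
  rw [Finset.card_eq_sum_card_fiberwise (f := fun φ => rmlClosure Fq i (LinearMap.ker φ))]
  · refine Finset.sum_congr rfl fun t ht => ?_
    rw [Finset.filter_filter]
    refine congrArg _ (Finset.filter_congr fun φ _ => and_iff_right_of_imp fun hφ => ?_)
    rw [← le_rmlClosure_iff hX, hφ]
    exact (Finset.mem_filter.mp ht).2
  · intro φ hφ
    rw [Finset.mem_coe, Finset.mem_filter, ← Finset.mem_coe, h𝓛, le_rmlClosure_iff hX]
    exact ⟨rmlClosure_mem_RML i _, (Finset.mem_filter.mp hφ).2⟩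

open scoped Classical in
theorem sum_moebius_mul_pow_eq_card_allFullRank (hn : n ≠ 0) {𝓛 : Finset (Submodule L (Fin n → L))}
    (h𝓛 : ↑𝓛 = RML Fq L n (n - 1)) (μ : Submodule L (Fin n → L) → ℚ)
    (hμ : ∀ t ∈ 𝓛, ∑ s ∈ 𝓛 with s ≤ t, μ s = if t = ⊥ then 1 else 0) :
    ∑ X ∈ 𝓛, μ X * ((Fintype.card L : ℚ) ^ finrank L W) ^ (n - finrank L X) =
      Nat.card {φ : (Fin n → L) →ₗ[L] W // AllFullRank Fq (LinearMap.ker φ)} := by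
  have hbot : ⊥ ∈ 𝓛 := by rw [← Finset.mem_coe, h𝓛]; exact bot_mem_RML _
  have hcount : ∀ X ∈ 𝓛, ((Fintype.card L : ℚ) ^ finrank L W) ^ (n - finrank L X) =
      ∑ t ∈ 𝓛 with X ≤ t, (Nat.card {φ : (Fin n → L) →ₗ[L] W //
        rmlClosure Fq (n - 1) (LinearMap.ker φ) = t} : ℚ) := by
    intro X hX
    rw [← Finset.mem_coe, h𝓛] at hX
    rw [← Nat.cast_sum, ← card_linearMap_ker_ge_eq_sum_rmlClosure h𝓛 hX,
      card_linearMap_ker_ge, finrank_fin_fun]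
    push_cast
    ring
  rw [Finset.sum_congr rfl fun X hX => by rw [hcount X hX],
    Finset.sum_moebius_mul_sum_ge hbot _ _ hμ]
  exact congrArg _ (Nat.card_congr (Equiv.subtypeEquivRight fun φ => rmlClosure_eq_bot_iff hn _))

end CriticalProblem

open scoped Classical in
theorem sum_moebius_mul_pow_eq_prod {Fq L : Type*} [Field Fq] [Fintype Fq] [Field L] [Fintype L]
    [Algebra Fq L] {n : ℕ} (hn : n ≠ 0) {𝓛 : Finset (Submodule L (Fin n → L))}
    (h𝓛 : ↑𝓛 = RML Fq L n (n - 1)) (μ : Submodule L (Fin n → L) → ℚ)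
    (hμ : ∀ t ∈ 𝓛, ∑ s ∈ 𝓛 with s ≤ t, μ s = if t = ⊥ then 1 else 0) (k : ℕ) :
    ∑ X ∈ 𝓛, μ X * ((Fintype.card L : ℚ) ^ k) ^ (n - finrank L X) =
      ((Fintype.card L : ℚ) ^ k - (Fintype.card L : ℚ) ^ (n - 1) +
          ∏ s ∈ Finset.Icc 1 (n - 1),
            ((Fintype.card Fq : ℚ) ^ finrank Fq L - (Fintype.card Fq : ℚ) ^ s)) *
        ∏ j ∈ Finset.range (n - 1), ((Fintype.card L : ℚ) ^ k - (Fintype.card L : ℚ) ^ j) := by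
  have h := sum_moebius_mul_pow_eq_card_allFullRank (W := Fin k → L) hn h𝓛 μ hμ
  have hsplit := Finset.prod_range_succ
    (fun j => (Fintype.card L : ℚ) ^ k - (Fintype.card L : ℚ) ^ j) (n - 1)
  rw [Nat.sub_add_cancel (Nat.one_le_iff_ne_zero.mpr hn)] at hsplit
  rw [card_linearMap_ker_allFullRank, finrank_fin_fun, card_fullRankLines hn, hsplit] at h
  rw [h]
  ring

open scoped Classical in
theorem charPoly_rml_n_sub_one_general (q m n : ℕ) (hn : 2 ≤ n)
    (hnm : n ≤ m) (Fq L : Type) [Field Fq] [Field L] [Algebra Fq L] [Fintype Fq]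
    (hcard : Fintype.card Fq = q) (hdim : Module.finrank Fq L = m)
    (μ : Submodule L (Fin n → L) → ℚ)
    (hμ : ∀ t ∈ RML Fq L n (n - 1),
      (∑ᶠ s ∈ {s | s ∈ RML Fq L n (n - 1) ∧ s ≤ t}, μ s) = if t = ⊥ then 1 else 0) :
    ∀ x : ℚ,
      (∑ᶠ X ∈ RML Fq L n (n - 1), μ X * x ^ (n - Module.finrank L ↥X)) =
        (x - (q : ℚ) ^ ((n - 1) * m) +
            ∏ s ∈ Finset.Icc 1 (n - 1), ((q : ℚ) ^ m - (q : ℚ) ^ s)) *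
          ∏ j ∈ Finset.range (n - 1), (x - (q : ℚ) ^ (m * j)) := by
  have : FiniteDimensional Fq L := .of_finrank_pos (by omega)
  have : Finite L := Module.finite_of_finite Fq
  have := Fintype.ofFinite L
  have hQ : (Fintype.card L : ℚ) = (q : ℚ) ^ m := by
    rw [card_eq_pow_finrank (K := Fq), hcard, hdim, Nat.cast_pow]
  have hQ1 : 1 < (q : ℚ) ^ m := hQ ▸ by exact_mod_cast Fintype.one_lt_card
  obtain ⟨𝓛, h𝓛⟩ := (RML Fq L n (n - 1)).toFinite.exists_finset_coe
  have hμ𝓛 : ∀ t ∈ 𝓛, ∑ s ∈ 𝓛 with s ≤ t, μ s = if t = ⊥ then 1 else 0 := fun t ht => by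
    rw [← hμ t (h𝓛 ▸ ht), ← finsum_mem_coe_finset, Finset.coe_filter]
    simp only [← Finset.mem_coe, h𝓛]
  have heval := sum_moebius_mul_pow_eq_prod (by omega) h𝓛 μ hμ𝓛
  rw [hQ, hcard, hdim] at heval
  have hpoly := Polynomial.eq_of_forall_eval_pow_eq (pow_right_injective₀ (by positivity) hQ1.ne')
    (p := ∑ X ∈ 𝓛, Polynomial.C (μ X) * Polynomial.X ^ (n - finrank L X))
    (r := (Polynomial.X - Polynomial.C (((q : ℚ) ^ m) ^ (n - 1)) +
        Polynomial.C (∏ s ∈ Finset.Icc 1 (n - 1), ((q : ℚ) ^ m - (q : ℚ) ^ s))) *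
      ∏ j ∈ Finset.range (n - 1), (Polynomial.X - Polynomial.C (((q : ℚ) ^ m) ^ j)))
    (fun k => by simpa [Polynomial.eval_finsetSum, Polynomial.eval_prod] using heval k)
  intro x
  rw [← h𝓛, finsum_mem_coe_finset, mul_comm (n - 1), pow_mul]
  simp_rw [pow_mul]
  simpa [Polynomial.eval_finsetSum, Polynomial.eval_prod] using congrArg (Polynomial.eval x) hpoly

open scoped Classical in
theorem charPoly_rml_n_sub_one (q m n : ℕ) (hq : IsPrimePow q) (hn : 2 ≤ n)
    (hnm : n ≤ m) (Fq L : Type) [Field Fq] [Field L] [Algebra Fq L] [Fintype Fq]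
    (hcard : Fintype.card Fq = q) (hdim : Module.finrank Fq L = m)
    (μ : Submodule L (Fin n → L) → ℚ)
    (hμ : ∀ t ∈ RML Fq L n (n - 1),
      (∑ᶠ s ∈ {s | s ∈ RML Fq L n (n - 1) ∧ s ≤ t}, μ s) = if t = ⊥ then 1 else 0) :
    ∀ x : ℚ,
      (∑ᶠ X ∈ RML Fq L n (n - 1), μ X * x ^ (n - Module.finrank L ↥X)) =
        (x - (q : ℚ) ^ ((n - 1) * m) +
            ∏ s ∈ Finset.Icc 1 (n - 1), ((q : ℚ) ^ m - (q : ℚ) ^ s)) *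
          ∏ j ∈ Finset.range (n - 1), (x - (q : ℚ) ^ (m * j)) :=
  charPoly_rml_n_sub_one_general q m n hn hnm Fq L hcard hdim μ hμ
end
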